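/- Let β < 0, s > 0, α, μ ∈ ℝ, and let ε₁, ε₂, ε₃ ∈ {1, −1} with ε₁ε₂ε₃ = 1. Set κ = ε₁·(α/(2|β|))·√(|β|/(6s)) − ε₂·μ/(6s), B₀ = −α/(2β) − ε₃·√(6s/|β|)·μ/(6s), B₁ = ε₃·√(6s/|β|)·κ, C₁ = 2κ, D₁ = i·ε·(α/(2|β|) − ε₃·(μ/(6s))·√(6s/|β|)) for ε ∈ {1,−1}, and v = −μ²/(6s) − 2s·(α/(2|β|)·√(|β|/(6s)) − ε₃·μ/(6s))² − α²/(4β). Then the complex-valued function u(ξ) = B₀ + B₁ tanh(C₁ ξ) + D₁ sech(C₁ ξ) satisfies u'' + (μ/s) u' + (β/(3s)) u³ + (α/(2s)) u² − (v/s) u = 0 for all real ξ with C₁ ξ in the domain of sech and tanh. -/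

import Mathlib

open Real Complex

/-! With `σ = ε₁ε₃`, the coefficients satisfy `B₁ = σ B₀` and `D₁ = iε B₀`, so the ansatz is
`u = B₀ + B₁ g` with `g = tanh (C₁ξ) + j sech (C₁ξ)` and `j = iσε`. Since `j² = -1`, `g` solves the
Riccati equation `g' = κ (1 - g²)` (in fact `g ξ = tanh (κξ + jπ/4)`). Substituting `u = B₀ + B₁ g`
turns the ODE into a cubic polynomial in `g`, and its four coefficients vanish for the given
`B₀, B₁, κ, v`: the square roots only enter through `√(|β|/(6s)) √(6s/|β|) = 1` and
`|β| √(6s/|β|)² = 6s`. -/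

section Riccati

variable {𝕜 𝔸 : Type*} [NontriviallyNormedField 𝕜] [NormedCommRing 𝔸] [NormedAlgebra 𝕜 𝔸]
  {g u : 𝕜 → 𝔸} {k A B : 𝔸}

theorem deriv_eq_of_riccati (hg : ∀ x, HasDerivAt g (k * (1 - g x ^ 2)) x)
    (hu : ∀ x, u x = A + B * g x) :
    deriv u = fun x => B * k * (1 - g x ^ 2) := by
  funext x
  rw [show u = fun x => A + B * g x from funext hu]
  simpa only [mul_assoc] using (((hg x).const_mul B).const_add A).deriv

theorem deriv_deriv_eq_of_riccati (hg : ∀ x, HasDerivAt g (k * (1 - g x ^ 2)) x)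
    (hu : ∀ x, u x = A + B * g x) (x : 𝕜) :
    deriv (deriv u) x = -2 * B * k ^ 2 * g x * (1 - g x ^ 2) := by
  rw [deriv_eq_of_riccati hg hu]
  have h := (((hg x).fun_pow 2).const_sub 1).const_mul (B * k)
  rw [h.deriv]
  push_cast
  ring

end Riccati

theorem Complex.hasDerivAt_tanh_add_div_cosh {j z : ℂ} (hj : j ^ 2 = -1) (hz : cosh z ≠ 0) :
    HasDerivAt (fun w => tanh w + j / cosh w) ((1 - (tanh z + j / cosh z) ^ 2) / 2) z := by
  have hfun : (fun w => tanh w + j / cosh w) = fun w => (sinh w + j) / cosh w := by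
    funext w
    rw [tanh_eq_sinh_div_cosh, add_div]
  rw [hfun]
  refine (((hasDerivAt_sinh z).add_const j).div (hasDerivAt_cosh z) hz).congr_deriv ?_
  rw [tanh_eq_sinh_div_cosh, ← add_div]
  field_simp
  linear_combination cosh_sq_sub_sinh_sq z + hj

theorem Complex.hasDerivAt_tanh_add_div_cosh_ofReal_mul {j : ℂ} (hj : j ^ 2 = -1) (c x : ℝ) :
    HasDerivAt (fun y : ℝ => tanh (c * y) + j / cosh (c * y))
      (c / 2 * (1 - (tanh (c * x) + j / cosh (c * x)) ^ 2)) x := by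
  have hcosh : cosh (c * x) ≠ 0 := by
    rw [← ofReal_mul, ← ofReal_cosh]
    exact ofReal_ne_zero.mpr (Real.cosh_pos _).ne'
  have hline : HasDerivAt (fun w : ℂ => c * w) c x := by
    simpa using (hasDerivAt_id (x : ℂ)).const_mul (c : ℂ)
  refine (((hasDerivAt_tanh_add_div_cosh hj hcosh).comp (x : ℂ) hline).comp_ofReal).congr_deriv ?_
  ring

/-- The coefficients of `g³, g², g, 1` vanish when `u = A + B g`, with `g' = k (1 - g²)`, is
substituted into `6s (u'' + (μ/s) u' + (β/(3s)) u³ + (α/(2s)) u² − (v/s) u)`. -/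
def RiccatiBalance {R : Type*} [CommRing R] (s μ β α v A B k : R) : Prop :=
  β * B ^ 2 = -6 * s * k ^ 2 ∧ B * (2 * β * A + α) = 2 * μ * k ∧
    β * A ^ 2 + α * A = v + 2 * s * k ^ 2 ∧ 6 * μ * B * k + 2 * β * A ^ 3 + 3 * α * A ^ 2 = 6 * v * A

namespace RiccatiBalance

theorem map {R S : Type*} [CommRing R] [CommRing S] (f : R →+* S) {s μ β α v A B k : R}
    (h : RiccatiBalance s μ β α v A B k) :
    RiccatiBalance (f s) (f μ) (f β) (f α) (f v) (f A) (f B) (f k) := by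
  obtain ⟨h₃, h₂, h₁, h₀⟩ := h
  refine ⟨?_, ?_, ?_, ?_⟩
  · simpa [map_ofNat] using congrArg f h₃
  · simpa [map_ofNat] using congrArg f h₂
  · simpa [map_ofNat] using congrArg f h₁
  · simpa [map_ofNat] using congrArg f h₀

theorem residual_eq_zero {K : Type*} [Field K] [CharZero K] {s μ β α v A B k : K}
    (h : RiccatiBalance s μ β α v A B k) (hs : s ≠ 0) (G : K) :
    -2 * B * k ^ 2 * G * (1 - G ^ 2) + μ / s * (B * k * (1 - G ^ 2)) + β / (3 * s) * (A + B * G) ^ 3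
      + α / (2 * s) * (A + B * G) ^ 2 - v / s * (A + B * G) = 0 := by
  obtain ⟨h₃, h₂, h₁, h₀⟩ := h
  field_simp
  linear_combination 2 * B * G ^ 3 * h₃ + 3 * B * G ^ 2 * h₂ + 6 * B * G * h₁ + h₀

end RiccatiBalance

-- For the cBKdV wave: `a = |β|`, `r = √(6s/|β|)`, `X = α/(2|β|)`, `m = μ/(6s)`, `w = κ/ε₁`.
theorem riccatiBalance_of_normal_form {R : Type*} [CommRing R] {a s r w X m e₁ e₃ : R}
    (har : a * r ^ 2 = 6 * s) (hX : X = r * w + e₃ * r * m) (he₁ : e₁ ^ 2 = 1)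
    (he₃ : e₃ ^ 2 = 1) :
    RiccatiBalance s (6 * s * m) (-a) (2 * a * X) (a * X ^ 2 - 6 * s * m ^ 2 - 2 * s * w ^ 2)
      (r * w) (e₁ * e₃ * (r * w)) (e₁ * w) := by
  subst hX
  refine ⟨?_, ?_, ?_, ?_⟩
  · linear_combination (-e₁ ^ 2 * e₃ ^ 2 * w ^ 2) * har - 6 * s * e₁ ^ 2 * w ^ 2 * he₃
  · linear_combination 2 * e₁ * e₃ ^ 2 * w * m * har + 12 * s * e₁ * w * m * he₃
  · linear_combination (-e₃ ^ 2 * m ^ 2) * har - 6 * s * m ^ 2 * he₃ - 2 * s * w ^ 2 * he₁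
  · linear_combination (-2 * r * w ^ 3 - 6 * e₃ * r * m * w ^ 2 - 6 * e₃ ^ 2 * r * m ^ 2 * w) * har
      + 36 * s * e₃ * r * m * w ^ 2 * he₁ - 36 * s * r * m ^ 2 * w * he₃

theorem cbkdv_riccatiBalance {α β μ s ε₁ ε₂ ε₃ κ B₀ B₁ v : ℝ} (hβ : β < 0) (hs : 0 < s)
    (hε₁ : ε₁ ^ 2 = 1) (hε₃ : ε₃ ^ 2 = 1) (hconstraint : ε₁ * ε₂ * ε₃ = 1)
    (hκ : κ = ε₁ * (α / (2 * |β|)) * Real.sqrt (|β| / (6 * s)) - ε₂ * μ / (6 * s))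
    (hB₀ : B₀ = -α / (2 * β) - ε₃ * Real.sqrt (6 * s / |β|) * μ / (6 * s))
    (hB₁ : B₁ = ε₃ * Real.sqrt (6 * s / |β|) * κ)
    (hv : v = -μ ^ 2 / (6 * s)
      - 2 * s * (α / (2 * |β|) * Real.sqrt (|β| / (6 * s)) - ε₃ * μ / (6 * s)) ^ 2
      - α ^ 2 / (4 * β)) :
    B₁ = ε₁ * ε₃ * B₀ ∧ RiccatiBalance s μ β α v B₀ B₁ κ := by
  rw [abs_of_neg hβ] at hκ hB₀ hB₁ hv
  have hβ' : 0 < -β := neg_pos.mpr hβ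
  have hβ₀ : β ≠ 0 := hβ.ne
  set q := Real.sqrt (-β / (6 * s))
  set r := Real.sqrt (6 * s / -β)
  have hqr : q * r = 1 := by
    rw [← Real.sqrt_mul (by positivity), show -β / (6 * s) * (6 * s / -β) = 1 by field_simp,
      Real.sqrt_one]
  have har : -β * r ^ 2 = 6 * s := by
    rw [Real.sq_sqrt (by positivity)]
    field_simp
  set w := q * (α / (2 * -β)) - ε₃ * (μ / (6 * s))
  have hε₂ : ε₂ = ε₁ * ε₃ := by
    linear_combination ε₁ * ε₃ * hconstraint - ε₂ * ε₃ ^ 2 * hε₁ - ε₂ * hε₃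
  have hκw : κ = ε₁ * w := by rw [hκ, hε₂]; ring
  have hB₀w : B₀ = r * w := by
    rw [hB₀]
    linear_combination (-(α / (2 * -β))) * hqr
  have hB₁w : B₁ = ε₁ * ε₃ * B₀ := by
    rw [hB₁, hκw, hB₀w]
    ring
  refine ⟨hB₁w, ?_⟩
  have h := riccatiBalance_of_normal_form (w := w) (X := α / (2 * -β)) (m := μ / (6 * s)) har
    (by linear_combination (-(α / (2 * -β))) * hqr) hε₁ hε₃
  rw [neg_neg] at h
  convert h using 1
  · field_simp
  · field_simp
  · rw [hv]
    simp only [w]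
    field_simp
    ring
  · rw [hB₁w, hB₀w]

theorem cbkdv_hyperbolic_ansatz_solution_general
    (α β μ s : ℝ) (hβ : β < 0) (hs : 0 < s)
    (ε ε₁ ε₂ ε₃ : ℝ)
    (hε : ε = 1 ∨ ε = -1) (hε₁ : ε₁ = 1 ∨ ε₁ = -1)
    (hε₃ : ε₃ = 1 ∨ ε₃ = -1)
    (hconstraint : ε₁ * ε₂ * ε₃ = 1)
    (κ B₀ B₁ C₁ v : ℝ) (D₁ : ℂ)
    (hκ : κ = ε₁ * (α / (2 * |β|)) * Real.sqrt (|β| / (6 * s)) - ε₂ * μ / (6 * s))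
    (hB₀ : B₀ = -α / (2 * β) - ε₃ * Real.sqrt (6 * s / |β|) * μ / (6 * s))
    (hB₁ : B₁ = ε₃ * Real.sqrt (6 * s / |β|) * κ)
    (hC₁ : C₁ = 2 * κ)
    (hD₁ : D₁ = Complex.I * ε *
      (α / (2 * |β|) - ε₃ * (μ / (6 * s)) * Real.sqrt (6 * s / |β|)))
    (hv : v = -μ ^ 2 / (6 * s)
      - 2 * s * (α / (2 * |β|) * Real.sqrt (|β| / (6 * s)) - ε₃ * μ / (6 * s)) ^ 2
      - α ^ 2 / (4 * β))
    (u : ℝ → ℂ)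
    (hu : ∀ ξ : ℝ, u ξ = (B₀ : ℂ) + (B₁ : ℂ) * Complex.tanh (C₁ * ξ)
      + D₁ / Complex.cosh (C₁ * ξ)) :
    ∀ ξ : ℝ,
      deriv (deriv u) ξ + (μ / s : ℂ) * deriv u ξ + (β / (3 * s) : ℂ) * (u ξ) ^ 3
        + (α / (2 * s) : ℂ) * (u ξ) ^ 2 - (v / s : ℂ) * u ξ = 0 := by
  have hε₁' : ε₁ ^ 2 = 1 := sq_eq_one_iff.mpr hε₁
  have hε₃' : ε₃ ^ 2 = 1 := sq_eq_one_iff.mpr hε₃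
  obtain ⟨hB₁B₀, hbal⟩ := cbkdv_riccatiBalance hβ hs hε₁' hε₃' hconstraint hκ hB₀ hB₁ hv
  have hσ : ((ε₁ : ℂ) * ε₃) ^ 2 = 1 := by
    exact_mod_cast (by rw [mul_pow, hε₁', hε₃', one_mul] : (ε₁ * ε₃) ^ 2 = 1)
  set j : ℂ := I * (ε₁ * ε₃ * ε)
  have hj : j ^ 2 = -1 := by
    rw [mul_pow, mul_pow, hσ, I_sq, ← ofReal_pow, sq_eq_one_iff.mpr hε, ofReal_one]
    ring
  set g : ℝ → ℂ := fun x => Complex.tanh (C₁ * x) + j / Complex.cosh (C₁ * x)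
  have hk : (C₁ : ℂ) / 2 = κ := by rw [hC₁]; push_cast; ring
  have hg : ∀ x, HasDerivAt g (κ * (1 - g x ^ 2)) x := fun x =>
    hk ▸ hasDerivAt_tanh_add_div_cosh_ofReal_mul hj C₁ x
  have hD : D₁ = I * ε * B₀ := by
    rw [hD₁, hB₀, abs_of_neg hβ]
    push_cast
    ring
  have hug : ∀ x, u x = B₀ + B₁ * g x := fun x => by
    rw [hu, hD, hB₁B₀]
    push_cast
    linear_combination (-(I * ε * B₀ / Complex.cosh (C₁ * x))) * hσ
  intro ξ
  rw [deriv_deriv_eq_of_riccati hg hug, deriv_eq_of_riccati hg hug, hug ξ]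
  exact (hbal.map ofRealHom).residual_eq_zero (ofReal_ne_zero.mpr hs.ne') (g ξ)

/-- The hyperbolic ansatz `u(ξ) = B₀ + B₁ tanh(C₁ξ) + D₁ sech(C₁ξ)` with the
coefficients of the first solution set satisfies the traveling-wave ODE
`u'' + (μ/s) u' + (β/(3s)) u³ + (α/(2s)) u² − (v/s) u = 0`. -/
theorem cbkdv_hyperbolic_ansatz_solution
    (α β μ s : ℝ) (hβ : β < 0) (hs : 0 < s)
    (ε ε₁ ε₂ ε₃ : ℝ)
    (hε : ε = 1 ∨ ε = -1) (hε₁ : ε₁ = 1 ∨ ε₁ = -1)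
    (hε₂ : ε₂ = 1 ∨ ε₂ = -1) (hε₃ : ε₃ = 1 ∨ ε₃ = -1)
    (hconstraint : ε₁ * ε₂ * ε₃ = 1)
    (κ B₀ B₁ C₁ v : ℝ) (D₁ : ℂ)
    (hκ : κ = ε₁ * (α / (2 * |β|)) * Real.sqrt (|β| / (6 * s)) - ε₂ * μ / (6 * s))
    (hB₀ : B₀ = -α / (2 * β) - ε₃ * Real.sqrt (6 * s / |β|) * μ / (6 * s))
    (hB₁ : B₁ = ε₃ * Real.sqrt (6 * s / |β|) * κ)
    (hC₁ : C₁ = 2 * κ)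
    (hD₁ : D₁ = Complex.I * ε *
      (α / (2 * |β|) - ε₃ * (μ / (6 * s)) * Real.sqrt (6 * s / |β|)))
    (hv : v = -μ ^ 2 / (6 * s)
      - 2 * s * (α / (2 * |β|) * Real.sqrt (|β| / (6 * s)) - ε₃ * μ / (6 * s)) ^ 2
      - α ^ 2 / (4 * β))
    (u : ℝ → ℂ)
    (hu : ∀ ξ : ℝ, u ξ = (B₀ : ℂ) + (B₁ : ℂ) * Complex.tanh (C₁ * ξ)
      + D₁ / Complex.cosh (C₁ * ξ)) :
    ∀ ξ : ℝ,
      deriv (deriv u) ξ + (μ / s : ℂ) * deriv u ξ + (β / (3 * s) : ℂ) * (u ξ) ^ 3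
        + (α / (2 * s) : ℂ) * (u ξ) ^ 2 - (v / s : ℂ) * u ξ = 0 :=
  cbkdv_hyperbolic_ansatz_solution_general α β μ s hβ hs ε ε₁ ε₂ ε₃ hε hε₁ hε₃ hconstraint κ B₀ B₁
    C₁ v D₁ hκ hB₀ hB₁ hC₁ hD₁ hv u hu
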